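/- arXiv:2105.04544 — 3 statements merged into one kernel-verified Lean document; each statement's English description precedes it below -/
import Mathlib

section
/- Let F be a field, P an invertible m₁×m₁ matrix, Q an invertible m₂×m₂ matrix, and Γ an m₁×m₂ matrix over F. Set D := (P·Γ) ⊗̄ Q (an (m₁·m₂)×m₂ matrix) and E := P ⊗ Q. Then Dᵀ·E⁻¹·D = (Γᵀ·Pᵀ·Γ) ⊙ Qᵀ, where ⊙ denotes the entrywise (Hadamard) product; i.e., for all q,p ∈ {1,…,m₂}, (Dᵀ E⁻¹ D)[q,p] = (Γᵀ Pᵀ Γ)[q,p] · Q[p,q]. In particular, if P and Q are symmetric, Dᵀ·E⁻¹·D = (Γᵀ·P·Γ) ⊙ Q. -/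
open Matrix Kronecker

/-- The column-wise Kronecker (Khatri–Rao) product of `A : m₁×n` and `B : m₂×n`:
the `(m₁·m₂)×n` matrix with entries `(A ⊗̄ B)[(i,s), q] = A i q * B s q`. -/
def khatriRao {R : Type*} [Mul R] {m₁ m₂ n : Type*}
    (A : Matrix m₁ n R) (B : Matrix m₂ n R) : Matrix (m₁ × m₂) n R :=
  Matrix.of fun p q => A p.1 q * B p.2 q

lemma kronecker_mul_khatriRao {R : Type*} [CommRing R] {m₁ m₂ n : Type*}
    [Fintype m₁] [Fintype m₂]
    (X : Matrix m₁ m₁ R) (Y : Matrix m₂ m₂ R)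
    (A : Matrix m₁ n R) (B : Matrix m₂ n R) :
    (X ⊗ₖ Y) * khatriRao A B = khatriRao (X * A) (Y * B) := by
  ext ⟨i, s⟩ q
  simp only [mul_apply, khatriRao, kroneckerMap_apply, Matrix.of_apply,
    Fintype.sum_prod_type]
  rw [Finset.sum_mul_sum]
  exact Finset.sum_congr rfl fun j _ => Finset.sum_congr rfl fun t _ => by ring

lemma khatriRao_transpose_mul {R : Type*} [CommRing R] {m₁ m₂ n : Type*}
    [Fintype m₁] [Fintype m₂]
    (A C : Matrix m₁ n R) (B D : Matrix m₂ n R) :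
    (khatriRao A B)ᵀ * khatriRao C D = (Aᵀ * C) ⊙ (Bᵀ * D) := by
  ext q p
  simp only [mul_apply, khatriRao, Matrix.of_apply, transpose_apply,
    Fintype.sum_prod_type, hadamard_apply]
  rw [Finset.sum_mul_sum]
  exact Finset.sum_congr rfl fun i _ => Finset.sum_congr rfl fun s _ => by ring

/-- **The m₂×m₂ reduction.** With `D := (P·Γ) ⊗̄ Q` and `E := P ⊗ Q` for invertible `P`
and `Q`, one has `Dᵀ·E⁻¹·D = (Γᵀ·Pᵀ·Γ) ⊙ Qᵀ` (Hadamard product), i.e. entrywise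
`(Dᵀ E⁻¹ D)[q,p] = (Γᵀ Pᵀ Γ)[q,p] · Q[p,q]`; in particular, if `P` and `Q` are
symmetric then `Dᵀ·E⁻¹·D = (Γᵀ·P·Γ) ⊙ Q`. -/
theorem khatriRao_sandwich
    {F : Type*} [Field F] (m₁ m₂ : ℕ)
    (P : Matrix (Fin m₁) (Fin m₁) F) (Q : Matrix (Fin m₂) (Fin m₂) F)
    (Γ : Matrix (Fin m₁) (Fin m₂) F) (hP : IsUnit P) (hQ : IsUnit Q)
    (D : Matrix (Fin m₁ × Fin m₂) (Fin m₂) F) (hD : D = khatriRao (P * Γ) Q)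
    (E : Matrix (Fin m₁ × Fin m₂) (Fin m₁ × Fin m₂) F) (hE : E = P ⊗ₖ Q) :
    Dᵀ * E⁻¹ * D = (Γᵀ * Pᵀ * Γ) ⊙ Qᵀ ∧
    (∀ q p, (Dᵀ * E⁻¹ * D) q p = (Γᵀ * Pᵀ * Γ) q p * Q p q) ∧
    (P.IsSymm → Q.IsSymm → Dᵀ * E⁻¹ * D = (Γᵀ * P * Γ) ⊙ Q) := by
  have hPinv : P⁻¹ * P = 1 := nonsing_inv_mul P (isUnit_iff_isUnit_det P |>.mp hP)
  have hQinv : Q⁻¹ * Q = 1 := nonsing_inv_mul Q (isUnit_iff_isUnit_det Q |>.mp hQ)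
  have key : Dᵀ * E⁻¹ * D = (Γᵀ * Pᵀ * Γ) ⊙ Qᵀ := by
    subst hD hE
    rw [Matrix.inv_kronecker, Matrix.mul_assoc, kronecker_mul_khatriRao,
      ← Matrix.mul_assoc P⁻¹, hPinv, hQinv, Matrix.one_mul, khatriRao_transpose_mul,
      transpose_mul, Matrix.mul_one]
  refine ⟨key, fun q p => ?_, fun hPs hQs => ?_⟩
  · rw [key]; simp [hadamard_apply]
  · rw [key, hPs.eq, hQs.eq]
end

section
/- (Effective dimension bound.) Let b > 1, β > 0 and λ > 0 be real numbers, and let l : ℕ≥1 → ℝ be a sequence with 0 ≤ l_k ≤ β·k^{−b} for all k ≥ 1. Then the series Σ_{k=1}^∞ l_k/(l_k + λ) converges and Σ_{k=1}^∞ l_k/(l_k + λ) ≤ β^{1/b} · ((π/b)/sin(π/b)) · λ^{−1/b}. -/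
open Real Set MeasureTheory

/-! Each term is at most `(1 + (λ/β) x^b)⁻¹` at `x = k`, a decreasing function of `x`, so by the
integral test the series is at most `∫₀^∞ (1 + (λ/β) x^b)⁻¹ dx = (β/λ)^{1/b} ∫₀^∞ (1 + x^b)⁻¹ dx`.
The substitutions `x = t^{1/b}` and `t = u/(1-u)` turn the last integral into
`(1/b) B(1/b, 1 - 1/b) = (1/b) Γ(1/b) Γ(1 - 1/b)`, and Euler's reflection formula evaluates this to
`(π/b) / sin(π/b)`. -/

theorem integral_rpow_mul_one_sub_rpow_neg {s : ℝ} (h0 : 0 < s) (h1 : s < 1) :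
    ∫ x in (0 : ℝ)..1, x ^ (s - 1) * (1 - x) ^ (-s) = π / sin (π * s) := by
  have hbeta : Complex.betaIntegral s (1 - s) = ((π / sin (π * s) : ℝ) : ℂ) := by
    have h := Complex.Gamma_mul_Gamma_eq_betaIntegral (s := (s : ℂ)) (t := 1 - s)
      (by simpa using h0) (by simpa using h1)
    rw [add_sub_cancel, Complex.Gamma_one, one_mul] at h
    rw [← h, Complex.Gamma_mul_Gamma_one_sub]
    push_cast
    rfl
  have hreal : Complex.betaIntegral s (1 - s)
      = ((∫ x in (0 : ℝ)..1, x ^ (s - 1) * (1 - x) ^ (-s) : ℝ) : ℂ) := by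
    rw [Complex.betaIntegral, ← intervalIntegral.integral_ofReal]
    refine intervalIntegral.integral_congr fun x hx => ?_
    rw [uIcc_of_le zero_le_one] at hx
    push_cast
    rw [Complex.ofReal_cpow hx.1, Complex.ofReal_cpow (sub_nonneg.2 hx.2)]
    push_cast
    ring_nf
  exact_mod_cast hreal.symm.trans hbeta

theorem image_div_one_add_Ioi : (fun t : ℝ => t / (1 + t)) '' Ioi 0 = Ioo 0 1 := by
  ext u
  constructor
  · rintro ⟨t, ht : 0 < t, rfl⟩
    exact ⟨by positivity, (div_lt_one (by linarith)).2 (by linarith)⟩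
  · rintro ⟨hu0, hu1⟩
    refine ⟨u / (1 - u), div_pos hu0 (sub_pos.2 hu1), ?_⟩
    field_simp
    ring

theorem injOn_div_one_add_Ioi : InjOn (fun t : ℝ => t / (1 + t)) (Ioi 0) := by
  intro x (hx : 0 < x) y (hy : 0 < y) h
  field_simp at h
  linarith

theorem integral_Ioi_rpow_div_one_add {s : ℝ} (h0 : 0 < s) (h1 : s < 1) :
    ∫ t in Ioi (0 : ℝ), t ^ (s - 1) / (1 + t) = π / sin (π * s) := by
  have hderiv : ∀ t ∈ Ioi (0 : ℝ),
      HasDerivWithinAt (fun t : ℝ => t / (1 + t)) ((1 + t) ^ 2)⁻¹ (Ioi 0) t := by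
    intro t (ht : 0 < t)
    refine (((hasDerivAt_id' t).div ((hasDerivAt_id' t).const_add 1)
      (by positivity)).hasDerivWithinAt).congr_deriv ?_
    field_simp
    ring
  have hsubst := integral_image_eq_integral_abs_deriv_smul measurableSet_Ioi hderiv
    injOn_div_one_add_Ioi (fun u => u ^ (s - 1) * (1 - u) ^ (-s))
  rw [image_div_one_add_Ioi, ← integral_Ioc_eq_integral_Ioo,
    ← intervalIntegral.integral_of_le zero_le_one,
    integral_rpow_mul_one_sub_rpow_neg h0 h1] at hsubst
  rw [hsubst]
  refine setIntegral_congr_fun measurableSet_Ioi fun t (ht : 0 < t) => ?_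
  have h1t : 0 < 1 + t := by linarith
  have hcompl : 1 - t / (1 + t) = (1 + t)⁻¹ := by field_simp; ring
  have hpow : (1 + t) ^ s = (1 + t) ^ (s - 1) * (1 + t) := by
    rw [← rpow_add_one h1t.ne', sub_add_cancel]
  have : (1 + t) ^ (s - 1) ≠ 0 := (rpow_pos_of_pos h1t _).ne'
  simp only [hcompl, abs_of_pos (by positivity : 0 < ((1 + t) ^ 2)⁻¹), smul_eq_mul]
  rw [div_rpow ht.le h1t.le, inv_rpow h1t.le, rpow_neg h1t.le, inv_inv, hpow]
  field_simp

theorem integral_Ioi_inv_one_add_rpow {b : ℝ} (hb : 1 < b) :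
    ∫ x in Ioi (0 : ℝ), (1 + x ^ b)⁻¹ = (π / b) / sin (π / b) := by
  have hb0 : 0 < b := by linarith
  have hsubst := integral_comp_rpow_Ioi_of_pos (g := fun x : ℝ => (1 + x ^ b)⁻¹)
    (one_div_pos.2 hb0)
  rw [← hsubst, setIntegral_congr_fun measurableSet_Ioi
      (g := fun t => 1 / b * (t ^ (1 / b - 1) / (1 + t))) fun t (ht : 0 < t) => ?_,
    integral_const_mul, integral_Ioi_rpow_div_one_add (by positivity)
      ((div_lt_one hb0).2 hb)]
  · rw [mul_one_div]
    ring
  · simp only [smul_eq_mul]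
    rw [← rpow_mul ht.le, one_div_mul_cancel hb0.ne', rpow_one]
    ring

theorem integral_Ioi_inv_one_add_mul_rpow {b c : ℝ} (hb : 1 < b) (hc : 0 < c) :
    ∫ x in Ioi (0 : ℝ), (1 + c * x ^ b)⁻¹ = c ^ (-(1 / b)) * ((π / b) / sin (π / b)) := by
  have hb0 : 0 < b := by linarith
  have ha : 0 < c ^ (1 / b) := rpow_pos_of_pos hc _
  have hscale := integral_comp_mul_left_Ioi (fun y : ℝ => (1 + y ^ b)⁻¹) 0 ha
  rw [mul_zero, smul_eq_mul, integral_Ioi_inv_one_add_rpow hb, ← rpow_neg hc.le] at hscale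
  rw [← hscale]
  refine setIntegral_congr_fun measurableSet_Ioi fun x (hx : 0 < x) => ?_
  rw [mul_rpow ha.le hx.le, ← rpow_mul hc.le, one_div_mul_cancel hb0.ne', rpow_one]

theorem integrableOn_Ioi_inv_one_add_mul_rpow {b c : ℝ} (hb : 1 < b) (hc : 0 < c) :
    IntegrableOn (fun x : ℝ => (1 + c * x ^ b)⁻¹) (Ioi 0) := by
  have hsin : 0 < sin (π / b) :=
    sin_pos_of_pos_of_lt_pi (by positivity) (div_lt_self pi_pos hb)
  -- a non-integrable function has integral `0`
  refine Integrable.of_integral_ne_zero ?_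
  rw [integral_Ioi_inv_one_add_mul_rpow hb hc]
  positivity

theorem antitoneOn_inv_one_add_mul_rpow {b c : ℝ} (hb : 0 ≤ b) (hc : 0 ≤ c) :
    AntitoneOn (fun x : ℝ => (1 + c * x ^ b)⁻¹) (Ici 0) := by
  intro x (hx : 0 ≤ x) y _ hxy
  have : 0 ≤ x ^ b := rpow_nonneg hx b
  exact inv_anti₀ (by positivity) (by gcongr)

theorem div_add_le_inv_one_add_div_mul_rpow {β lam k b x : ℝ} (hβ : 0 < β) (hlam : 0 < lam)
    (hk : 0 < k) (hx0 : 0 ≤ x) (hx : x ≤ β * k ^ (-b)) :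
    x / (x + lam) ≤ (1 + lam / β * k ^ b)⁻¹ := by
  have hkb : 0 < k ^ b := rpow_pos_of_pos hk b
  have hxkb : x * k ^ b ≤ β := by
    rwa [rpow_neg hk.le, ← div_eq_mul_inv, le_div_iff₀ hkb] at hx
  rw [show (1 + lam / β * k ^ b)⁻¹ = β / (β + lam * k ^ b) by field_simp,
    div_le_div_iff₀ (by positivity) (by positivity)]
  nlinarith

theorem AntitoneOn.summable_and_tsum_le_integral_of_le {f : ℝ → ℝ} {g : ℕ → ℝ}
    (anti : AntitoneOn f (Ici 0)) (integrable : IntegrableOn f (Ioi 0))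
    (nonneg : ∀ t ∈ Ioi 0, 0 ≤ f t) (hg0 : ∀ k, 0 ≤ g k) (hgf : ∀ k, g k ≤ f (k + 1)) :
    Summable g ∧ ∑' k, g k ≤ ∫ x in Ioi 0, f x := by
  have hf : Summable fun k : ℕ => f (k + 1 : ℕ) :=
    (summable_nat_add_iff 1).2 (anti.summable_of_integrableOn_Ioi_zero integrable nonneg)
  have hgf' : ∀ k, g k ≤ f (k + 1 : ℕ) := fun k => by exact_mod_cast hgf k
  have hg : Summable g := hf.of_nonneg_of_le hg0 hgf'
  exact ⟨hg, (hg.tsum_le_tsum hgf' hf).trans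
    (anti.tsum_add_one_le_integral integrable nonneg)⟩

/-- **Effective dimension bound.** If `b > 1`, `β > 0`, `λ > 0` and `0 ≤ l_k ≤ β·k^{-b}`
for all `k ≥ 1`, then `∑_{k=1}^∞ l_k/(l_k + λ)` converges and is bounded by
`β^{1/b} · ((π/b)/sin(π/b)) · λ^{-1/b}`. -/
theorem effective_dimension_bound
    (b β lam : ℝ) (hb : 1 < b) (hβ : 0 < β) (hlam : 0 < lam)
    (l : ℕ → ℝ)
    (hl : ∀ k : ℕ, 1 ≤ k → 0 ≤ l k ∧ l k ≤ β * (k : ℝ) ^ (-b)) :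
    Summable (fun k : ℕ => l (k + 1) / (l (k + 1) + lam)) ∧
    ∑' k : ℕ, l (k + 1) / (l (k + 1) + lam) ≤
      β ^ (1 / b) * ((π / b) / Real.sin (π / b)) * lam ^ (-(1 / b)) := by
  have hc : 0 < lam / β := div_pos hlam hβ
  have hl' : ∀ k : ℕ, 0 ≤ l (k + 1) ∧ l (k + 1) ≤ β * ((k : ℝ) + 1) ^ (-b) := fun k => by
    exact_mod_cast hl (k + 1) k.succ_pos
  obtain ⟨hsum, hle⟩ :=
    (antitoneOn_inv_one_add_mul_rpow (by linarith) hc.le).summable_and_tsum_le_integral_of_le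
      (g := fun k => l (k + 1) / (l (k + 1) + lam))
      (integrableOn_Ioi_inv_one_add_mul_rpow hb hc) (fun t (ht : 0 < t) => by positivity)
      (fun k => div_nonneg (hl' k).1 (by linarith [(hl' k).1]))
      (fun k => div_add_le_inv_one_add_div_mul_rpow hβ hlam (by positivity) (hl' k).1 (hl' k).2)
  refine ⟨hsum, hle.trans_eq ?_⟩
  rw [integral_Ioi_inv_one_add_mul_rpow hb hc, div_rpow hlam.le hβ.le, rpow_neg hβ.le,
    rpow_neg hlam.le, div_inv_eq_mul]
  ring
end

section
/- Let H be a complex Hilbert space, let T and T̂ be positive bounded linear operators on H, and let λ > 0. Assume ‖(T − T̂) ∘ (T + λ·1)⁻¹‖ ≤ 3/4. Then T̂ + λ·1 is invertible and ‖√T ∘ (T̂ + λ·1)⁻¹‖ ≤ 2/√λ, where √T is the positive square root of T and ‖·‖ is the operator norm. -/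
/-!
Write `X = (T - T̂)(T + λ)⁻¹`, so that `T̂ + λ = (1 - X)(T + λ)`. Since `‖X‖ ≤ 3/4`, the Neumann
series inverts `1 - X` with `‖(1 - X)⁻¹‖ ≤ 4`. On the other hand `√T (T + λ)⁻¹` is the functional
calculus of `t ↦ √t / (t + λ)`, which is at most `1 / (2√λ)` on `[0, ∞)` by AM-GM, so
`‖√T (T̂ + λ)⁻¹‖ ≤ ‖√T (T + λ)⁻¹‖ ‖(1 - X)⁻¹‖ ≤ 2 / √λ`.
-/

open scoped Ring

section NeumannPerturbation

variable {R : Type*} [NormedRing R] [HasSummableGeomSeries R]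

theorem norm_inverse_one_sub_le (h1 : ‖(1 : R)‖ ≤ 1) {x : R} (hx : ‖x‖ < 1) :
    ‖(1 - x)⁻¹ʳ‖ ≤ (1 - ‖x‖)⁻¹ := by
  have := tsum_geometric_le_of_norm_lt_one x hx
  rw [geom_series_eq_inverse x hx] at this
  linarith

omit [HasSummableGeomSeries R] in
theorem eq_one_sub_sub_mul_inverse_mul {a : R} (ha : IsUnit a) (b : R) :
    b = (1 - (a - b) * a⁻¹ʳ) * a := by
  rw [sub_mul, one_mul, mul_assoc, Ring.inverse_mul_cancel a ha, mul_one, sub_sub_cancel]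

theorem isUnit_of_norm_sub_mul_inverse_lt_one {a b : R} (ha : IsUnit a)
    (h : ‖(a - b) * a⁻¹ʳ‖ < 1) : IsUnit b := by
  rw [eq_one_sub_sub_mul_inverse_mul ha b]
  exact (isUnit_one_sub_of_norm_lt_one h).mul ha

theorem norm_mul_inverse_le_of_norm_sub_mul_inverse_lt_one (h1 : ‖(1 : R)‖ ≤ 1) {a b : R}
    (ha : IsUnit a) (h : ‖(a - b) * a⁻¹ʳ‖ < 1) (c : R) :
    ‖c * b⁻¹ʳ‖ ≤ ‖c * a⁻¹ʳ‖ * (1 - ‖(a - b) * a⁻¹ʳ‖)⁻¹ :=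
  calc ‖c * b⁻¹ʳ‖ = ‖c * a⁻¹ʳ * (1 - (a - b) * a⁻¹ʳ)⁻¹ʳ‖ := by
        conv_lhs =>
          rw [eq_one_sub_sub_mul_inverse_mul ha b, Ring.inverse_mul (.inr ha), ← mul_assoc]
    _ ≤ ‖c * a⁻¹ʳ‖ * (1 - ‖(a - b) * a⁻¹ʳ‖)⁻¹ :=
        (norm_mul_le _ _).trans <|
          mul_le_mul_of_nonneg_left (norm_inverse_one_sub_le h1 h) (norm_nonneg _)

end NeumannPerturbation

theorem Real.sqrt_mul_inv_add_le {x r : ℝ} (hx : 0 ≤ x) (hr : 0 < r) :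
    √x * (x + r)⁻¹ ≤ (2 * √r)⁻¹ := by
  rw [← div_eq_mul_inv, div_le_iff₀ (by positivity), inv_mul_eq_div,
    le_div_iff₀ (by positivity)]
  nlinarith [sq_nonneg (√x - √r), Real.sq_sqrt hx, Real.sq_sqrt hr.le]

theorem norm_sqrt_mul_inverse_add_algebraMap_le {A : Type*} [CStarAlgebra A] [PartialOrder A]
    [StarOrderedRing A] {a : A} (ha : 0 ≤ a) {r : ℝ} (hr : 0 < r) :
    ‖CFC.sqrt a * (a + algebraMap ℝ A r)⁻¹ʳ‖ ≤ (2 * √r)⁻¹ := by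
  have hpos : ∀ x ∈ spectrum ℝ a, x + r ≠ 0 := fun x hx =>
    (add_pos_of_nonneg_of_pos (spectrum_nonneg_of_nonneg ha hx) hr).ne'
  have hshift : a + algebraMap ℝ A r = cfc (· + r) a := by
    rw [cfc_add_const r (fun x => x) a, cfc_id' ℝ a]
  rw [CFC.sqrt_eq_real_sqrt a ha, cfcₙ_eq_cfc, hshift, ← cfc_inv _ a hpos,
    ← cfc_mul Real.sqrt (fun x => (x + r)⁻¹) a Real.continuous_sqrt.continuousOn
      ((continuousOn_id.add continuousOn_const).inv₀ hpos)]
  refine norm_cfc_le (by positivity) fun x hx => ?_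
  have hx₀ := spectrum_nonneg_of_nonneg ha hx
  rw [Real.norm_of_nonneg (by positivity)]
  exact Real.sqrt_mul_inv_add_le hx₀ hr

theorem sqrt_comp_perturbed_resolvent_bound_general
    {H : Type*} [NormedAddCommGroup H] [InnerProductSpace ℂ H] [CompleteSpace H]
    (T That : H →L[ℂ] H) (hT : T.IsPositive)
    (lam : ℝ) (hlam : 0 < lam)
    (hnorm : ‖(T - That) * Ring.inverse (T + (lam : ℂ) • (1 : H →L[ℂ] H))‖ ≤ 3 / 4) :
    IsUnit (That + (lam : ℂ) • (1 : H →L[ℂ] H)) ∧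
    ‖CFC.sqrt T * Ring.inverse (That + (lam : ℂ) • (1 : H →L[ℂ] H))‖ ≤
      2 / Real.sqrt lam := by
  have hT₀ : 0 ≤ T := T.nonneg_iff_isPositive.mpr hT
  have hscalar : (lam : ℂ) • (1 : H →L[ℂ] H) = algebraMap ℝ (H →L[ℂ] H) lam := by
    rw [Algebra.algebraMap_eq_smul_one, Complex.coe_smul]
  rw [hscalar] at hnorm ⊢
  rw [← add_sub_add_right_eq_sub T That (algebraMap ℝ (H →L[ℂ] H) lam)] at hnorm
  have hunit : IsUnit (T + algebraMap ℝ (H →L[ℂ] H) lam) :=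
    ((isStrictlyPositive_algebraMap hlam).nonneg_add hT₀).isUnit
  have hlt := hnorm.trans_lt (by norm_num : (3 / 4 : ℝ) < 1)
  refine ⟨isUnit_of_norm_sub_mul_inverse_lt_one hunit hlt, ?_⟩
  calc _ ≤ (2 * √lam)⁻¹ * (1 - 3 / 4)⁻¹ := by
        refine (norm_mul_inverse_le_of_norm_sub_mul_inverse_lt_one
          ContinuousLinearMap.norm_id_le hunit hlt _).trans ?_
        gcongr
        exact norm_sqrt_mul_inverse_add_algebraMap_le hT₀ hlam
    _ = 2 / √lam := by
        field_simp
        norm_num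

/-- **Neumann-series estimate.** Let `T` and `T̂` be positive bounded operators on a
complex Hilbert space and `λ > 0`. If `‖(T − T̂) ∘ (T + λ·1)⁻¹‖ ≤ 3/4`, then `T̂ + λ·1`
is invertible and `‖√T ∘ (T̂ + λ·1)⁻¹‖ ≤ 2/√λ`, where `√T = CFC.sqrt T` is the positive
square root of `T`. -/
theorem sqrt_comp_perturbed_resolvent_bound
    {H : Type*} [NormedAddCommGroup H] [InnerProductSpace ℂ H] [CompleteSpace H]
    (T That : H →L[ℂ] H) (hT : T.IsPositive) (hThat : That.IsPositive)
    (lam : ℝ) (hlam : 0 < lam)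
    (hnorm : ‖(T - That) * Ring.inverse (T + (lam : ℂ) • (1 : H →L[ℂ] H))‖ ≤ 3 / 4) :
    IsUnit (That + (lam : ℂ) • (1 : H →L[ℂ] H)) ∧
    ‖CFC.sqrt T * Ring.inverse (That + (lam : ℂ) • (1 : H →L[ℂ] H))‖ ≤
      2 / Real.sqrt lam :=
  sqrt_comp_perturbed_resolvent_bound_general T That hT lam hlam hnorm
end
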